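/- For every integer α ≥ 3, setting k_α = 2^{2α} + 2^α + 2 and m = 3·2^{2α} - 2^α + 1, the prefix of the Thue-Morse word of length k_α · m is not a k_α-anti-power; consequently Γ(k_α) ≥ 3·2^{2α} - 2^α + 1. -/

import Mathlib

open Filter

/-- The Thue-Morse word, indexed from 1: `tm i` is the parity of the number of
1's in the binary expansion of `i - 1`. -/
def tm (i : ℕ) : ℕ := (Nat.digits 2 (i - 1)).sum % 2

/-- The factor `t_a t_{a+1} ⋯ t_b` of the Thue-Morse word. -/
def seg (a b : ℕ) : List ℕ := (List.range (b + 1 - a)).map (fun j => tm (a + j))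

/-- The `i`-th block of length `m` of the Thue-Morse word (blocks indexed from 0):
`t_{im+1} ⋯ t_{(i+1)m}`. -/
def block (m i : ℕ) : List ℕ := seg (i * m + 1) ((i + 1) * m)

/-- The prefix of the Thue-Morse word of length `k * m` is a `k`-anti-power:
its `k` consecutive blocks of length `m` are pairwise distinct. -/
def IsAntiPowerPrefix (m k : ℕ) : Prop :=
  ∀ i j, i < k → j < k → i ≠ j → block m i ≠ block m j

/-- `w` is a factor (contiguous substring) of the Thue-Morse word. -/
def IsFactor (w : List ℕ) : Prop :=
  ∃ a : ℕ, w = (List.range w.length).map (fun j => tm (a + 1 + j))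

/-- `δ(m) = ⌈log₂ (m/3)⌉` (a nonnegative integer for `m ≥ 2`). -/
noncomputable def delta (m : ℕ) : ℕ := (⌈Real.logb 2 ((m : ℝ) / 3)⌉).toNat

/-- `⌈log₂ m⌉`. -/
noncomputable def ell (m : ℕ) : ℕ := (⌈Real.logb 2 (m : ℝ)⌉).toNat

/-- `K(m)`: the smallest `k` such that the prefix of the Thue-Morse word of
length `k * m` is not a `k`-anti-power. -/
noncomputable def Kap (m : ℕ) : ℕ := sInf {k | ¬ IsAntiPowerPrefix m k}

/-- `γ(k)`: the smallest odd positive integer `m` such that the prefix of the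
Thue-Morse word of length `k * m` is a `k`-anti-power. -/
noncomputable def gam (k : ℕ) : ℕ := sInf {m | Odd m ∧ IsAntiPowerPrefix m k}

/-- `Γ(k)`: the largest odd positive integer `m` such that the prefix of the
Thue-Morse word of length `k * m` is not a `k`-anti-power. -/
noncomputable def Gam (k : ℕ) : ℕ := sSup {m | Odd m ∧ ¬ IsAntiPowerPrefix m k}

/-- The Thue-Morse morphism `μ` (0 ↦ 01, 1 ↦ 10) on words. -/
def mu (w : List ℕ) : List ℕ := w.flatMap (fun a => if a = 0 then [0, 1] else [1, 0])

/-! Write `t` for the Thue-Morse word indexed from 0, `P = 2^α`, `Q = 2^(2α)` and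
`m = 3Q - P + 1`. Since `t (2n) = t n` and `t (2n+1) = 1 - t n`, an agreement
`t (n + d) = t n` for `n ∈ [a, b)` lifts to `t (n + 2^v d) = t n` for `n ∈ [2^v a, 2^v b)`.
The shift by `m` fixes `t` on the three positions `3P+2, 3P+3, 3P+4` (both sides read `101`);
scaling by `Q` gives agreement under the shift `Q m` on `[Q(3P+2), Q(3P+5))`, and since
`(P+1) m = Q(3P+2) + 1`, this window contains block `P+1`, which is therefore equal to
block `P+1+Q`.

Conversely, halving an agreement window reduces any shift to an odd one, and an odd shift
can fix `t` on at most 4 consecutive positions because `t` contains no factor `aaa`. Hence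
equal blocks `i < j` of odd length `m` force `m + 2 ≤ 6 (j - i)`, so the odd `m` for which
the prefix of length `k m` is not a `k`-anti-power are bounded and `Γ(k)` is an honest
supremum. -/

def thueMorse (n : ℕ) : ℕ := (Nat.digits 2 n).sum % 2

lemma thueMorse_lt_two (n : ℕ) : thueMorse n < 2 := Nat.mod_lt _ two_pos

lemma thueMorse_two_pow_mul_add {t r : ℕ} (x : ℕ) (hr : r < 2 ^ t) :
    thueMorse (2 ^ t * x + r) = (thueMorse x + thueMorse r) % 2 := by
  rcases Nat.eq_zero_or_pos x with rfl | hx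
  · simp [thueMorse]
  have hlen : (Nat.digits 2 r).length ≤ t := (Nat.digits_length_le_iff one_lt_two r).2 hr
  have hdig := Nat.digits_append_zeroes_append_digits (n := r)
    (k := t - (Nat.digits 2 r).length) one_lt_two hx
  rw [Nat.add_sub_cancel' hlen, add_comm r] at hdig
  simp only [thueMorse, ← hdig, List.sum_append, List.sum_replicate, smul_zero, add_zero]
  omega

lemma thueMorse_two_mul (n : ℕ) : thueMorse (2 * n) = thueMorse n := by
  simpa [Nat.mod_eq_of_lt (thueMorse_lt_two n), thueMorse] using
    thueMorse_two_pow_mul_add (t := 1) n zero_lt_two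

lemma thueMorse_two_mul_add_one (n : ℕ) : thueMorse (2 * n + 1) = (thueMorse n + 1) % 2 := by
  simpa [thueMorse] using thueMorse_two_pow_mul_add (t := 1) n one_lt_two

lemma not_thueMorse_three_eq (n : ℕ) :
    ¬ (thueMorse n = thueMorse (n + 1) ∧ thueMorse (n + 1) = thueMorse (n + 2)) := by
  rintro ⟨h₁, h₂⟩
  obtain ⟨p, rfl | rfl⟩ := Nat.even_or_odd' n
  · rw [thueMorse_two_mul, thueMorse_two_mul_add_one] at h₁
    have := thueMorse_lt_two p
    omega
  · rw [show 2 * p + 1 + 1 = 2 * (p + 1) by ring, show 2 * p + 1 + 2 = 2 * (p + 1) + 1 by ring,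
      thueMorse_two_mul, thueMorse_two_mul_add_one] at h₂
    have := thueMorse_lt_two (p + 1)
    omega

-- The factor of `t` on `[a, b + d)` has period `d`.
def HasPeriodOn (d a b : ℕ) : Prop :=
  ∀ n ∈ Set.Ico a b, thueMorse (n + d) = thueMorse n

namespace HasPeriodOn

variable {d a b : ℕ}

lemma two_mul (h : HasPeriodOn d a b) : HasPeriodOn (2 * d) (2 * a) (2 * b) := by
  rintro n ⟨h₁, h₂⟩
  obtain ⟨p, rfl | rfl⟩ := Nat.even_or_odd' n
  · rw [← mul_add, thueMorse_two_mul, thueMorse_two_mul, h p ⟨by omega, by omega⟩]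
  · rw [show 2 * p + 1 + 2 * d = 2 * (p + d) + 1 by ring, thueMorse_two_mul_add_one,
      thueMorse_two_mul_add_one, h p ⟨by omega, by omega⟩]

lemma two_pow_mul (h : HasPeriodOn d a b) (v : ℕ) :
    HasPeriodOn (2 ^ v * d) (2 ^ v * a) (2 ^ v * b) := by
  induction v with
  | zero => simpa using h
  | succ v ih => simpa only [pow_succ', mul_assoc] using ih.two_mul

lemma mono (h : HasPeriodOn d a b) {a' b' : ℕ} (ha : a ≤ a') (hb : b' ≤ b) :
    HasPeriodOn d a' b' :=
  fun n hn => h n ⟨ha.trans hn.1, hn.2.trans_le hb⟩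

lemma half (h : HasPeriodOn (2 * d) a b) : HasPeriodOn d ((a + 1) / 2) ((b + 1) / 2) := by
  rintro p ⟨h₁, h₂⟩
  simpa only [← mul_add, thueMorse_two_mul] using h (2 * p) ⟨by omega, by omega⟩

lemma le_add_four_of_odd (hd : Odd d) (h : HasPeriodOn d a b) : b ≤ a + 4 := by
  by_contra! hab
  obtain ⟨e, rfl⟩ := hd
  set p := (a + 1) / 2
  have h₀ := h (2 * p) ⟨by omega, by omega⟩
  have h₁ := h (2 * p + 1) ⟨by omega, by omega⟩
  have h₂ := h (2 * (p + 1)) ⟨by omega, by omega⟩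
  have h₃ := h (2 * (p + 1) + 1) ⟨by omega, by omega⟩
  rw [show 2 * p + (2 * e + 1) = 2 * (p + e) + 1 by ring, thueMorse_two_mul_add_one,
    thueMorse_two_mul] at h₀
  rw [show 2 * p + 1 + (2 * e + 1) = 2 * (p + e + 1) by ring, thueMorse_two_mul,
    thueMorse_two_mul_add_one] at h₁
  rw [show 2 * (p + 1) + (2 * e + 1) = 2 * (p + e + 1) + 1 by ring, thueMorse_two_mul_add_one,
    thueMorse_two_mul] at h₂
  rw [show 2 * (p + 1) + 1 + (2 * e + 1) = 2 * (p + e + 2) by ring, thueMorse_two_mul,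
    thueMorse_two_mul_add_one] at h₃
  have := thueMorse_lt_two p
  have := thueMorse_lt_two (p + 1)
  have := thueMorse_lt_two (p + e)
  have := thueMorse_lt_two (p + e + 1)
  have := thueMorse_lt_two (p + e + 2)
  -- The odd shift carries the complementary pairs `t (2q), t (2q+1)` onto straddling pairs.
  exact not_thueMorse_three_eq (p + e) ⟨by omega, by omega⟩

lemma add_two_le_of_odd (hd : Odd d) {v : ℕ} (h : HasPeriodOn (2 ^ v * d) a b) :
    b + 2 ≤ a + 6 * 2 ^ v := by
  induction v generalizing a b with
  | zero => simpa using (h.le_add_four_of_odd (by simpa using hd))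
  | succ v ih =>
    have := ih (by rw [pow_succ', mul_assoc] at h; exact h.half)
    rw [pow_succ']
    omega

end HasPeriodOn

lemma block_eq_map (m i : ℕ) :
    block m i = (List.range m).map (fun s => thueMorse (i * m + s)) := by
  rw [block, seg, show (i + 1) * m + 1 - (i * m + 1) = m by ring_nf; omega]
  exact List.map_congr_left fun s _ => by rw [show i * m + 1 + s = i * m + s + 1 by ring]; rfl

lemma block_eq_block_iff {m i j : ℕ} (hij : i ≤ j) :
    block m i = block m j ↔ HasPeriodOn ((j - i) * m) (i * m) (i * m + m) := by
  have hj : j * m = i * m + (j - i) * m := by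
    rw [← add_mul, Nat.add_sub_cancel' hij]
  rw [block_eq_map, block_eq_map, List.map_inj_left]
  constructor
  · rintro h n ⟨h₁, h₂⟩
    obtain ⟨s, rfl⟩ := Nat.exists_eq_add_of_le h₁
    have := h s (List.mem_range.2 (by omega))
    rw [this, hj]; ring_nf
  · intro h s hs
    rw [hj, ← h (i * m + s) ⟨by omega, by simpa using hs⟩]; ring_nf

lemma add_two_le_of_block_eq {m i j : ℕ} (hm : Odd m) (hij : i < j)
    (h : block m i = block m j) : m + 2 ≤ 6 * (j - i) := by
  obtain ⟨v, c, hc, hvc⟩ := Nat.exists_eq_two_pow_mul_odd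
    (Nat.mul_ne_zero (Nat.sub_ne_zero_of_lt hij) hm.pos.ne')
  have hper := (block_eq_block_iff hij.le).1 h
  rw [hvc] at hper
  have hv : 2 ^ v ≤ j - i := Nat.le_of_dvd (Nat.sub_pos_of_lt hij)
    ((Nat.Coprime.pow_left v (Nat.coprime_two_left.2 hm)).dvd_of_dvd_mul_right ⟨c, hvc⟩)
  have := hper.add_two_le_of_odd hc
  omega

lemma bddAbove_odd_not_isAntiPowerPrefix (k : ℕ) :
    BddAbove {m | Odd m ∧ ¬ IsAntiPowerPrefix m k} := by
  refine ⟨6 * k, ?_⟩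
  rintro m ⟨hm, hk⟩
  simp only [IsAntiPowerPrefix, not_forall, not_not] at hk
  obtain ⟨i, j, hi, hj, hij, h⟩ := hk
  rcases Nat.lt_or_gt_of_ne hij with hij | hij
  · have := add_two_le_of_block_eq hm hij h
    omega
  · have := add_two_le_of_block_eq hm hij h.symm
    omega

section Construction

variable {α : ℕ}

lemma eight_le_two_pow (hα : 3 ≤ α) : 8 ≤ 2 ^ α :=
  le_trans (by norm_num) (Nat.pow_le_pow_right two_pos hα)

lemma hasPeriodOn_base (hα : 3 ≤ α) :
    HasPeriodOn (3 * 2 ^ (2 * α) - 2 ^ α + 1) (3 * 2 ^ α + 2) (3 * 2 ^ α + 5) := by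
  rintro n ⟨h₁, h₂⟩
  obtain ⟨r, rfl⟩ := Nat.exists_eq_add_of_le h₁
  have hr : r < 3 := by omega
  have hP := eight_le_two_pow hα
  have hQ : 2 ^ α * 2 + 5 < 2 ^ (2 * α) := by rw [two_mul, pow_add]; nlinarith
  rw [show 3 * 2 ^ α + 2 + r + (3 * 2 ^ (2 * α) - 2 ^ α + 1)
      = 2 ^ (2 * α) * 3 + (2 ^ α * 2 + (3 + r)) by omega,
    show 3 * 2 ^ α + 2 + r = 2 ^ α * 3 + (2 + r) by ring,
    thueMorse_two_pow_mul_add _ (by omega), thueMorse_two_pow_mul_add _ (by omega),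
    thueMorse_two_pow_mul_add _ (by omega)]
  interval_cases r <;> norm_num [thueMorse]

lemma block_eq_block (hα : 3 ≤ α) :
    block (3 * 2 ^ (2 * α) - 2 ^ α + 1) (2 ^ α + 1)
      = block (3 * 2 ^ (2 * α) - 2 ^ α + 1) (2 ^ (2 * α) + 2 ^ α + 1) := by
  have hscaled := (hasPeriodOn_base hα).two_pow_mul (2 * α)
  have hP := eight_le_two_pow hα
  have hQP : 2 ^ (2 * α) = 2 ^ α * 2 ^ α := by rw [two_mul, pow_add]
  generalize 2 ^ (2 * α) = Q at *
  generalize 2 ^ α = P at *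
  subst hQP
  have hPP : P ≤ P * P := Nat.le_mul_self P
  have hstart : (P + 1) * (3 * (P * P) - P + 1) = P * P * (3 * P + 2) + 1 := by
    zify [show P ≤ 3 * (P * P) by omega]
    ring
  rw [block_eq_block_iff (by omega), show P * P + P + 1 - (P + 1) = P * P by omega, hstart]
  have hend : P * P * (3 * P + 5) = P * P * (3 * P + 2) + 3 * (P * P) := by ring
  exact hscaled.mono (by omega) (by omega)

end Construction

theorem stmt11 (α : ℕ) (hα : 3 ≤ α) :
    ¬ IsAntiPowerPrefix (3 * 2 ^ (2 * α) - 2 ^ α + 1) (2 ^ (2 * α) + 2 ^ α + 2) ∧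
      3 * 2 ^ (2 * α) - 2 ^ α + 1 ≤ Gam (2 ^ (2 * α) + 2 ^ α + 2) := by
  have hQpos : 0 < 2 ^ (2 * α) := by positivity
  have hnot : ¬ IsAntiPowerPrefix (3 * 2 ^ (2 * α) - 2 ^ α + 1) (2 ^ (2 * α) + 2 ^ α + 2) :=
    fun h => h _ _ (by omega) (by omega) (by omega) (block_eq_block hα)
  have hodd : Odd (3 * 2 ^ (2 * α) - 2 ^ α + 1) := by
    have hPeven : 2 ∣ 2 ^ α := dvd_pow_self 2 (by omega)
    have hQeven : 2 ∣ 2 ^ (2 * α) := dvd_pow_self 2 (by omega)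
    have hPQ : 2 ^ α ≤ 2 ^ (2 * α) := Nat.pow_le_pow_right two_pos (by omega)
    rw [Nat.odd_iff]
    omega
  exact ⟨hnot, le_csSup (bddAbove_odd_not_isAntiPowerPrefix _) ⟨hodd, hnot⟩⟩
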